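/- arXiv:2503.19743 — 2 statements merged into one kernel-verified Lean document; each statement's English description precedes it below -/
import Mathlib

section
/- If two Cauchy densities with parameter a are convolved, the result is a Cauchy density with parameter 2a: for all x ∈ ℝ, ∫_ℝ (1/π · a/(a²+(x−y)²)) · (1/π · a/(a²+y²)) dy = (1/π) · 2a/((2a)² + x²). -/
/-!
Write `P = a² + y²` and `Q = a² + (x - y)²`. Partial fractions give
`(x² + 4a²) / (P Q) = 1 / P + 1 / Q + 2 (a² + y (x - y)) / (P Q)`.
Both `1 / P` and `1 / Q` integrate to `π / a`, while the last term integrates to `0`: it is the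
derivative of `(log P - log Q) / (2x)` when `x ≠ 0` and of `y / P` when `x = 0`, and both
antiderivatives tend to `0` at `±∞`.
-/

open MeasureTheory Real Filter Topology Bornology

theorem integral_eq_zero_of_hasDerivAt_of_tendsto_cobounded {E : Type*} [NormedAddCommGroup E]
    [NormedSpace ℝ E] [CompleteSpace E] {f f' : ℝ → E} {m : E}
    (hderiv : ∀ y, HasDerivAt f (f' y) y) (hf' : Integrable f')
    (hf : Tendsto f (cobounded ℝ) (𝓝 m)) : ∫ y, f' y = 0 := by
  rw [integral_of_hasDerivAt_of_tendsto hderiv hf'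
    (hf.mono_left IsOrderBornology.atBot_le_cobounded)
    (hf.mono_left IsOrderBornology.atTop_le_cobounded), sub_self]

theorem integrable_inv_sq_add_sq {a : ℝ} (ha : a ≠ 0) :
    Integrable fun y : ℝ => (a ^ 2 + y ^ 2)⁻¹ := by
  refine ((integrable_inv_one_add_sq.comp_div ha).const_mul (a ^ 2)⁻¹).congr
    (.of_forall fun y => ?_)
  field_simp

theorem integral_univ_inv_sq_add_sq {a : ℝ} (ha : a ≠ 0) :
    ∫ y : ℝ, (a ^ 2 + y ^ 2)⁻¹ = π / |a| := by
  have hscale : ∀ y : ℝ, (a ^ 2 + y ^ 2)⁻¹ = (a ^ 2)⁻¹ * (1 + (y / a) ^ 2)⁻¹ := fun y => by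
    field_simp
  simp_rw [hscale]
  rw [integral_const_mul, Measure.integral_comp_div (fun y => (1 + y ^ 2)⁻¹),
    integral_univ_inv_one_add_sq, smul_eq_mul, ← sq_abs]
  field_simp

theorem integrable_inv_mul_sq_add_sq {a : ℝ} (ha : a ≠ 0) (x : ℝ) :
    Integrable fun y : ℝ => ((a ^ 2 + (x - y) ^ 2) * (a ^ 2 + y ^ 2))⁻¹ := by
  refine ((integrable_inv_sq_add_sq ha).const_mul (a ^ 2)⁻¹).mono (by fun_prop)
    (.of_forall fun y => ?_)
  have : 0 < a ^ 2 := by positivity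
  rw [Real.norm_of_nonneg (by positivity), Real.norm_of_nonneg (by positivity), mul_inv]
  gcongr
  nlinarith

theorem inv_mul_sq_add_sq_partial_fractions {a : ℝ} (ha : a ≠ 0) (x y : ℝ) :
    ((a ^ 2 + (x - y) ^ 2) * (a ^ 2 + y ^ 2))⁻¹ * (x ^ 2 + 4 * a ^ 2) =
      (a ^ 2 + y ^ 2)⁻¹ + (a ^ 2 + (x - y) ^ 2)⁻¹ +
        2 * ((a ^ 2 + y * (x - y)) / ((a ^ 2 + (x - y) ^ 2) * (a ^ 2 + y ^ 2))) := by
  have hP : a ^ 2 + y ^ 2 ≠ 0 := by positivity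
  have hQ : a ^ 2 + (x - y) ^ 2 ≠ 0 := by positivity
  field_simp
  ring

theorem integrable_sq_add_mul_sub_div {a : ℝ} (ha : a ≠ 0) (x : ℝ) :
    Integrable fun y : ℝ =>
      (a ^ 2 + y * (x - y)) / ((a ^ 2 + (x - y) ^ 2) * (a ^ 2 + y ^ 2)) := by
  have hP := integrable_inv_sq_add_sq ha
  refine ((((integrable_inv_mul_sq_add_sq ha x).mul_const (x ^ 2 + 4 * a ^ 2)).sub
    (hP.add (hP.comp_sub_left x))).div_const 2).congr (.of_forall fun y => ?_)
  simp only [Pi.sub_apply, Pi.add_apply, inv_mul_sq_add_sq_partial_fractions ha x y]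
  ring

theorem tendsto_div_sq_add_sq_cobounded (a : ℝ) :
    Tendsto (fun y : ℝ => y / (a ^ 2 + y ^ 2)) (cobounded ℝ) (𝓝 0) := by
  have hφ : ContinuousAt (fun t : ℝ => t / (a ^ 2 * t ^ 2 + 1)) 0 := by
    fun_prop (disch := norm_num)
  refine (zero_div (a ^ 2 * 0 ^ 2 + 1) ▸ hφ.tendsto.comp tendsto_inv₀_cobounded).congr' ?_
  filter_upwards [eventually_ne_cobounded 0] with y hy
  simp only [Function.comp_apply]
  field_simp

theorem tendsto_log_sq_add_sq_sub_log_cobounded {a : ℝ} (ha : a ≠ 0) (x : ℝ) :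
    Tendsto (fun y : ℝ => log (a ^ 2 + y ^ 2) - log (a ^ 2 + (x - y) ^ 2))
      (cobounded ℝ) (𝓝 0) := by
  have hφ : ContinuousAt
      (fun t : ℝ => log ((a ^ 2 * t ^ 2 + 1) / (a ^ 2 * t ^ 2 + (x * t - 1) ^ 2))) 0 := by
    fun_prop (disch := norm_num)
  have hφ0 : log ((a ^ 2 * 0 ^ 2 + 1) / (a ^ 2 * 0 ^ 2 + (x * 0 - 1) ^ 2)) = 0 := by norm_num
  refine (hφ0 ▸ hφ.tendsto.comp tendsto_inv₀_cobounded).congr' ?_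
  filter_upwards [eventually_ne_cobounded 0] with y hy
  have hP : a ^ 2 + y ^ 2 ≠ 0 := by positivity
  have hQ : a ^ 2 + (x - y) ^ 2 ≠ 0 := by positivity
  rw [Function.comp_apply, ← log_div hP hQ]
  congr 1
  field_simp

theorem integral_sq_add_mul_sub_div_eq_zero {a : ℝ} (ha : a ≠ 0) (x : ℝ) :
    ∫ y : ℝ, (a ^ 2 + y * (x - y)) / ((a ^ 2 + (x - y) ^ 2) * (a ^ 2 + y ^ 2)) = 0 := by
  have hint := integrable_sq_add_mul_sub_div ha x
  rcases eq_or_ne x 0 with rfl | hx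
  · refine integral_eq_zero_of_hasDerivAt_of_tendsto_cobounded (fun y => ?_) hint
      (tendsto_div_sq_add_sq_cobounded a)
    have hP : a ^ 2 + y ^ 2 ≠ 0 := by positivity
    refine ((hasDerivAt_id' y).div ((hasDerivAt_pow 2 y).const_add (a ^ 2)) hP).congr_deriv ?_
    field_simp
    ring
  · refine integral_eq_zero_of_hasDerivAt_of_tendsto_cobounded (fun y => ?_) hint
      ((tendsto_log_sq_add_sq_sub_log_cobounded ha x).div_const (2 * x))
    have hP : a ^ 2 + y ^ 2 ≠ 0 := by positivity
    have hQ : a ^ 2 + (x - y) ^ 2 ≠ 0 := by positivity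
    have hlogP := ((hasDerivAt_pow 2 y).const_add (a ^ 2)).log hP
    have hlogQ := ((((hasDerivAt_id' y).const_sub x).fun_pow 2).const_add (a ^ 2)).log hQ
    refine ((hlogP.sub hlogQ).div_const (2 * x)).congr_deriv ?_
    field_simp
    ring

theorem integral_inv_mul_sq_add_sq {a : ℝ} (ha : a ≠ 0) (x : ℝ) :
    ∫ y : ℝ, ((a ^ 2 + (x - y) ^ 2) * (a ^ 2 + y ^ 2))⁻¹ =
      2 * π / (|a| * (x ^ 2 + 4 * a ^ 2)) := by
  have hD : x ^ 2 + 4 * a ^ 2 ≠ 0 := by positivity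
  have hP : Integrable fun y : ℝ => (a ^ 2 + y ^ 2)⁻¹ := integrable_inv_sq_add_sq ha
  have hQ : Integrable fun y : ℝ => (a ^ 2 + (x - y) ^ 2)⁻¹ := hP.comp_sub_left x
  rw [← mul_left_inj' hD, ← integral_mul_const]
  simp_rw [inv_mul_sq_add_sq_partial_fractions ha x]
  rw [integral_add (hP.fun_add hQ) ((integrable_sq_add_mul_sub_div ha x).const_mul 2),
    integral_add hP hQ, integral_const_mul, integral_sq_add_mul_sub_div_eq_zero ha,
    integral_sub_left_eq_self (fun y => (a ^ 2 + y ^ 2)⁻¹), integral_univ_inv_sq_add_sq ha]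
  field_simp
  ring

/-- The convolution of two Cauchy(a) densities is the Cauchy(2a) density. -/
theorem cauchy_conv_cauchy (a : ℝ) (ha : 0 < a) :
    ∀ x : ℝ,
      (∫ y : ℝ, (1 / Real.pi * (a / (a ^ 2 + (x - y) ^ 2))) *
        (1 / Real.pi * (a / (a ^ 2 + y ^ 2)))) =
      (1 / Real.pi) * (2 * a / ((2 * a) ^ 2 + x ^ 2)) := by
  intro x
  have hproduct : ∀ y : ℝ,
      (1 / π * (a / (a ^ 2 + (x - y) ^ 2))) * (1 / π * (a / (a ^ 2 + y ^ 2))) =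
        a ^ 2 / π ^ 2 * ((a ^ 2 + (x - y) ^ 2) * (a ^ 2 + y ^ 2))⁻¹ := fun y => by
    field_simp
  simp_rw [hproduct]
  rw [integral_const_mul, integral_inv_mul_sq_add_sq ha.ne', abs_of_pos ha]
  field_simp
  ring
end

section
/- For the averaging-process generator L_N f(ω) = (1/N) ∑_{x,y∈[N]} [f(A_x^y ω) − f(ω)] applied to f(ω) = ⟨π^N(ω), G⟩ = (1/N)∑_x G(ω(x)), one has L_N f(ω) = 2⟨π^N ∗ π^N, G(·/2)⟩ − 2⟨π^N, G⟩. -/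
open MeasureTheory
open scoped ENNReal

lemma my_integrable_dirac {α : Type*} [MeasurableSpace α] [MeasurableSingletonClass α]
    {f : α → ℝ} (hf : Measurable f) (a : α) :
    Integrable f (Measure.dirac a) := by
  refine ⟨hf.aestronglyMeasurable, ?_⟩
  simp [HasFiniteIntegral, lintegral_dirac]

lemma integral_comb {ι : Type*} [Fintype ι] {α : Type*} [MeasurableSpace α]
    [MeasurableSingletonClass α] (c : ℝ≥0∞) (w : ι → α) {f : α → ℝ} (hf : Measurable f) :
    ∫ u, f u ∂(c • ∑ x, Measure.dirac (w x)) = c.toReal * ∑ x, f (w x) := by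
  rw [integral_smul_measure,
    integral_finset_sum_measure (fun i _ => my_integrable_dirac hf (w i))]
  simp [integral_dirac]

/-- Action of the averaging-process generator on `f(ω) = ⟨π^N(ω), G⟩`. -/
theorem generator_on_empirical (N : ℕ) (hN : 1 ≤ N) (ω : Fin N → ℝ)
    (G : ℝ → ℝ) (hG : Measurable G)
    (A : Fin N → Fin N → (Fin N → ℝ) → (Fin N → ℝ))
    (hA : ∀ x y w z, A x y w z = if z = x ∨ z = y then (w x + w y) / 2 else w z)
    (π : (Fin N → ℝ) → Measure ℝ)
    (hπ : ∀ w, π w = (N : ℝ≥0∞)⁻¹ • ∑ x, Measure.dirac (w x)) :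
    (1 / (N : ℝ)) * ∑ x, ∑ y,
        ((1 / (N : ℝ)) * ∑ z, G (A x y ω z) - (1 / (N : ℝ)) * ∑ z, G (ω z)) =
      2 * (∫ u, G (u / 2) ∂(Measure.map (fun p : ℝ × ℝ => p.1 + p.2)
          ((π ω).prod (π ω)))) - 2 * ∫ u, G u ∂(π ω) := by
  have hN0 : (N : ℝ) ≠ 0 := by positivity
  have hNE : ((N : ℝ≥0∞))⁻¹.toReal = (N : ℝ)⁻¹ := by
    simp [ENNReal.toReal_inv]
  -- integral of G against π ω
  have hG2 : Measurable fun u : ℝ => G (u / 2) := hG.comp (measurable_id.div_const 2)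
  have hint1 : ∫ u, G u ∂(π ω) = (N : ℝ)⁻¹ * ∑ x, G (ω x) := by
    rw [hπ, integral_comb _ _ hG, hNE]
  -- finiteness of π ω
  haveI hsf : SigmaFinite (π ω) := by
    have : IsFiniteMeasure (π ω) := by
      constructor
      rw [hπ]
      simp only [Measure.smul_apply, Measure.coe_finset_sum, Finset.sum_apply,
        Measure.dirac_apply' _ MeasurableSet.univ, smul_eq_mul]
      simp
      finiteness
    infer_instance
  -- product measure as combination of diracs
  have hprod : (π ω).prod (π ω)
      = ((N : ℝ≥0∞)⁻¹ * (N : ℝ≥0∞)⁻¹) • ∑ x : Fin N, ∑ y : Fin N,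
          Measure.dirac ((ω x, ω y) : ℝ × ℝ) := by
    refine Measure.prod_eq fun s t hs ht => ?_
    simp only [Measure.smul_apply, Measure.coe_finset_sum, Finset.sum_apply, smul_eq_mul]
    have hst : MeasurableSet (s ×ˢ t) := hs.prod ht
    have : ∀ x y : Fin N, Measure.dirac ((ω x, ω y) : ℝ × ℝ) (s ×ˢ t)
        = (Measure.dirac (ω x)) s * (Measure.dirac (ω y)) t := by
      intro x y
      rw [Measure.dirac_apply' _ hst, Measure.dirac_apply' _ hs, Measure.dirac_apply' _ ht]
      by_cases hx : ω x ∈ s <;> by_cases hy : ω y ∈ t <;>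
        simp [Set.indicator, hx, hy]
    simp_rw [this]
    rw [hπ]
    simp only [Measure.smul_apply, Measure.coe_finset_sum, Finset.sum_apply, smul_eq_mul]
    rw [← Finset.sum_mul_sum]
    ring
  -- integral of G(u/2) against the convolution
  have hint2 : (∫ u, G (u / 2) ∂(Measure.map (fun p : ℝ × ℝ => p.1 + p.2)
      ((π ω).prod (π ω))))
      = (N : ℝ)⁻¹ * (N : ℝ)⁻¹ * ∑ x, ∑ y, G ((ω x + ω y) / 2) := by
    have hGm : Measurable fun p : ℝ × ℝ => G ((p.1 + p.2) / 2) := hG2.comp measurable_add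
    rw [integral_map measurable_add.aemeasurable hG2.aestronglyMeasurable, hprod,
      integral_smul_measure]
    have : ∀ x : Fin N, ∫ p : ℝ × ℝ, G ((p.1 + p.2) / 2)
        ∂(∑ y : Fin N, Measure.dirac ((ω x, ω y) : ℝ × ℝ))
        = ∑ y, G ((ω x + ω y) / 2) := by
      intro x
      rw [integral_finset_sum_measure
        (fun y _ => my_integrable_dirac hGm _)]
      simp [integral_dirac]
    rw [integral_finset_sum_measure (fun x _ => integrable_finset_sum_measure.2
      (fun y _ => my_integrable_dirac hGm _))]
    simp_rw [this]
    simp [ENNReal.toReal_mul, hNE]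
  -- compute the sums over A
  have hsum : ∀ x y : Fin N, ∑ z, G (A x y ω z)
      = ∑ z, G (ω z) + (2 * G ((ω x + ω y) / 2) - G (ω x) - G (ω y)) := by
    intro x y
    rcases eq_or_ne x y with rfl | hxy
    · have h1 : ∀ z, A x x ω z = ω z := by
        intro z
        rw [hA]
        rcases eq_or_ne z x with rfl | hz
        · simp
        · simp [hz]
      simp only [h1]
      ring
    · have h1 : ∀ z, G (A x y ω z) = G (ω z)
          + (if z = x then G ((ω x + ω y) / 2) - G (ω x) else 0)
          + (if z = y then G ((ω x + ω y) / 2) - G (ω y) else 0) := by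
        intro z
        rw [hA]
        rcases eq_or_ne z x with rfl | hzx
        · simp [hxy]
        · rcases eq_or_ne z y with rfl | hzy
          · simp [hzx]
          · simp [hzx, hzy]
      simp only [h1, Finset.sum_add_distrib, Finset.sum_ite_eq', Finset.mem_univ, if_true]
      ring
  simp_rw [hsum]
  rw [hint1, hint2]
  have e1 : ∀ x y : Fin N,
      (1 / (N:ℝ)) * (∑ z, G (ω z) + (2 * G ((ω x + ω y) / 2) - G (ω x) - G (ω y)))
        - (1 / (N:ℝ)) * ∑ z, G (ω z)
      = (1 / (N:ℝ)) * (2 * G ((ω x + ω y) / 2)) - (1 / (N:ℝ)) * G (ω x)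
        - (1 / (N:ℝ)) * G (ω y) := by
    intro x y; ring
  simp_rw [e1]
  simp only [Finset.sum_sub_distrib, Finset.sum_const, Finset.card_univ, Fintype.card_fin,
    nsmul_eq_mul, ← Finset.mul_sum, mul_sub]
  field_simp
  ring
end
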